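/- Fix an integer n > 1. The n-site hopper transfer matrix U(n) is unitary: U(n) · U(n)* = I, where U(n)* is the conjugate transpose. -/

import Mathlib

open scoped Classical

/-- `efn x = exp(2πi x)`. -/
noncomputable def efn (x : ℝ) : ℂ := Complex.exp (2 * Real.pi * Complex.I * x)

/-- `ω_n`: a (2n)-th root of unity for even `n`, an n-th root of unity for odd `n`. -/
noncomputable def omegaN (n : ℕ) : ℂ :=
  if Even n then efn (1 / (2 * n)) else efn (1 / n)

/-- `n' = 2n` for even `n`, `n' = n` for odd `n`. -/
def nPrime (n : ℕ) : ℕ := if Even n then 2 * n else n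

/-- The `n`-site hopper transfer matrix `U(n)_{jk} = ω_n^{(j-k)^2}/√n`,
with `(j-k)^2` computed from the integer representatives in `{0,…,n-1}`. -/
noncomputable def hopperU (n : ℕ) [NeZero n] : Matrix (ZMod n) (ZMod n) ℂ :=
  fun j k => omegaN n ^ (((j.val : ℤ) - (k.val : ℤ)).natAbs ^ 2) / (Real.sqrt n : ℂ)

/-- The amplitude `a[γ] = ψ_{γ(0)} ∏_{t'=0}^{t-1} U(n)_{γ(t') γ(t'+1)}` of a `t`-path. -/
noncomputable def amp (n : ℕ) [NeZero n] (ψ : ZMod n → ℂ) (t : ℕ)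
    (γ : Fin (t + 1) → ZMod n) : ℂ :=
  ψ (γ 0) * ∏ k : Fin t, hopperU n (γ k.castSucc) (γ k.succ)

/-- The (un-reduced) phase exponent `Σ_{t'=0}^{t-1} (γ(t') - γ(t'+1))²` of a `t`-path,
differences computed via the integer representatives. -/
def phaseSum (n : ℕ) [NeZero n] (t : ℕ) (γ : Fin (t + 1) → ZMod n) : ℤ :=
  ∑ k : Fin t, (((γ k.castSucc).val : ℤ) - ((γ k.succ).val : ℤ)) ^ 2

/-- Restriction of a `t`-path to a `t₀`-path (`t₀ ≤ t`). -/
def restrictPath (n : ℕ) {t₀ t : ℕ} (h : t₀ ≤ t) (γ : Fin (t + 1) → ZMod n) :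
    Fin (t₀ + 1) → ZMod n :=
  fun k => γ (Fin.castLE (Nat.succ_le_succ h) k)

/-- `s^t_{ifp}(E)`: the number of `t`-paths in `E_t` starting at `i`, ending at `f`,
with phase exponent `p` (mod `n'`). -/
noncomputable def sCount (n : ℕ) [NeZero n] {t₀ : ℕ} (t : ℕ) (h : t₀ ≤ t)
    (E : Set (Fin (t₀ + 1) → ZMod n)) (i f : ZMod n) (p : ℕ) : ℕ :=
  Set.ncard {γ : Fin (t + 1) → ZMod n |
    restrictPath n h γ ∈ E ∧ γ 0 = i ∧ γ (Fin.last t) = f ∧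
    phaseSum n t γ % (nPrime n : ℤ) = (p : ℤ)}

/-- The quantum measure at time `t` of a set `F` of `t`-paths:
`μ_t(F) = Σ_f |Σ_{γ ∈ F, γ(t)=f} a[γ]|²`. -/
noncomputable def mu (n : ℕ) [NeZero n] (ψ : ZMod n → ℂ) (t : ℕ)
    (F : Set (Fin (t + 1) → ZMod n)) : ℝ :=
  ∑ f : ZMod n, (‖∑ γ : Fin (t + 1) → ZMod n,
    if γ ∈ F ∧ γ (Fin.last t) = f then amp n ψ t γ else 0‖) ^ 2

/-!
Write `ω = ω_n`. Expanding the squares, the `(j, k)` entry of `U U*` is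
`ω^(j² - k²) / n · ∑_m ((ω²)^(-(j - k)))^m`, and in both parities `ω²` is a primitive `n`-th
root of unity, so the geometric sum is `n` when `j = k` and `0` otherwise.
-/

lemma norm_efn (x : ℝ) : ‖efn x‖ = 1 := by
  simpa [efn, mul_comm _ Complex.I, mul_assoc] using
    Complex.norm_exp_ofReal_mul_I (2 * Real.pi * x)

lemma efn_pow (x : ℝ) (k : ℕ) : efn x ^ k = efn (k * x) := by
  rw [efn, efn, ← Complex.exp_nat_mul]
  push_cast
  ring_nf

lemma isPrimitiveRoot_efn_one_div (n : ℕ) [NeZero n] : IsPrimitiveRoot (efn (1 / n)) n := by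
  rw [efn]
  convert Complex.isPrimitiveRoot_exp n (NeZero.ne n) using 2
  push_cast
  ring

lemma norm_omegaN (n : ℕ) : ‖omegaN n‖ = 1 := by
  unfold omegaN
  split_ifs <;> exact norm_efn _

lemma isPrimitiveRoot_omegaN_sq (n : ℕ) [NeZero n] : IsPrimitiveRoot (omegaN n ^ 2) n := by
  rcases Nat.even_or_odd n with he | ho
  · rw [omegaN, if_pos he, efn_pow]
    convert isPrimitiveRoot_efn_one_div n using 2
    have : (n : ℝ) ≠ 0 := NeZero.ne _
    push_cast
    field_simp
  · rw [omegaN, if_neg (Nat.not_even_iff_odd.mpr ho)]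
    exact (isPrimitiveRoot_efn_one_div n).pow_of_coprime 2 (Odd.coprime_two_left ho)

lemma Complex.star_zpow_of_norm_eq_one {z : ℂ} (hz : ‖z‖ = 1) (a : ℤ) : star (z ^ a) = z ^ (-a) := by
  rw [star_zpow₀, Complex.star_def, ← Complex.inv_eq_conj hz, zpow_neg, inv_zpow]

lemma ZMod.sum_pow_val {R : Type*} [Semiring R] (n : ℕ) [NeZero n] (x : R) :
    ∑ m : ZMod n, x ^ m.val = ∑ i ∈ Finset.range n, x ^ i := by
  obtain ⟨k, rfl⟩ : ∃ k, n = k + 1 := Nat.exists_eq_succ_of_ne_zero (NeZero.ne n)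
  exact Fin.sum_univ_eq_sum_range (fun i => x ^ i) (k + 1)

lemma IsPrimitiveRoot.sum_zpow_pow_val {K : Type*} [Field K] {ζ : K} {n : ℕ} [NeZero n]
    (hζ : IsPrimitiveRoot ζ n) (d : ℤ) :
    ∑ m : ZMod n, (ζ ^ d) ^ m.val = if (n : ℤ) ∣ d then (n : K) else 0 := by
  rw [ZMod.sum_pow_val]
  split_ifs with hd
  · simp [(hζ.zpow_eq_one_iff_dvd d).mpr hd]
  · have hx : ζ ^ d ≠ 1 := fun h => hd ((hζ.zpow_eq_one_iff_dvd d).mp h)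
    have hxn : (ζ ^ d) ^ n = 1 := by
      rw [← zpow_natCast, ← zpow_mul, mul_comm, zpow_mul, zpow_natCast, hζ.pow_eq_one, one_zpow]
    rw [geom_sum_eq hx, hxn, sub_self, zero_div]

lemma ZMod.natCast_dvd_val_sub_val_iff {n : ℕ} [NeZero n] (j k : ZMod n) :
    (n : ℤ) ∣ (j.val : ℤ) - k.val ↔ j = k := by
  rw [← ZMod.intCast_zmod_eq_zero_iff_dvd]
  push_cast
  rw [ZMod.natCast_zmod_val, ZMod.natCast_zmod_val, sub_eq_zero]

lemma hopperU_apply (n : ℕ) [NeZero n] (j k : ZMod n) :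
    hopperU n j k = omegaN n ^ (((j.val : ℤ) - k.val) ^ 2) / (Real.sqrt n : ℂ) := by
  rw [hopperU, ← zpow_natCast]
  push_cast
  rw [sq_abs]

lemma hopperU_mul_star_hopperU (n : ℕ) [NeZero n] (j k m : ZMod n) :
    hopperU n j m * star (hopperU n k m) =
      omegaN n ^ (((j.val : ℤ) - k.val) * (j.val + k.val)) *
        ((omegaN n ^ 2) ^ (-((j.val : ℤ) - k.val))) ^ m.val / n := by
  have hω : omegaN n ≠ 0 := norm_ne_zero_iff.mp (by rw [norm_omegaN]; exact one_ne_zero)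
  have hsqrt : (Real.sqrt n : ℂ) * (Real.sqrt n : ℂ) = n := by
    rw [← Complex.ofReal_mul, Real.mul_self_sqrt n.cast_nonneg, Complex.ofReal_natCast]
  rw [hopperU_apply, hopperU_apply, star_div₀, Complex.star_zpow_of_norm_eq_one (norm_omegaN n),
    Complex.star_def, Complex.conj_ofReal, div_mul_div_comm, hsqrt, ← zpow_add₀ hω,
    ← zpow_natCast, ← zpow_mul, ← zpow_natCast, ← zpow_mul, ← zpow_add₀ hω]
  ring_nf

theorem stmt6_general (n : ℕ) [NeZero n] :
    hopperU n * (hopperU n).conjTranspose = 1 := by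
  ext j k
  have hn : (n : ℂ) ≠ 0 := NeZero.ne _
  simp_rw [Matrix.mul_apply, Matrix.conjTranspose_apply, hopperU_mul_star_hopperU,
    ← Finset.sum_div, ← Finset.mul_sum, (isPrimitiveRoot_omegaN_sq n).sum_zpow_pow_val,
    dvd_neg, ZMod.natCast_dvd_val_sub_val_iff, Matrix.one_apply]
  split_ifs with hjk
  · simp [hjk, hn]
  · simp

/-- The `n`-site hopper transfer matrix is unitary: `U(n)·U(n)* = 1`. -/
theorem stmt6 (n : ℕ) [NeZero n] (hn : 1 < n) :
    hopperU n * (hopperU n).conjTranspose = 1 :=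
  stmt6_general n
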